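/- Let k ≥ 1, C ≥ 2, λᵢ = 1/C for all i ∈ {1,…,C}, and let ψ : ℝ^k → ℝ be strictly convex and argument-wise strictly increasing. Then the unique minimizer A* of S over 𝒜* satisfies A*_{ii} = 1 for all i and A*_{ij} = −1/(C−1) for all i ≠ j. Consequently, if d ≥ C − 1 and M ∈ ℝ^{d×C} has unit-norm columns μ₁,…,μ_C with MᵀM = A*, then ∑_{i=1}^C μᵢ = 0, i.e., the columns form an equiangular tight frame (simplex ETF) in ℝ^d. -/

import Mathlib

/-!
With uniform class weights, `S` is strictly convex on the convex set `𝒜*` and invariant under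
relabelling the classes, so its unique minimiser is fixed by every simultaneous permutation of
rows and columns: it is an equicorrelation matrix with some off-diagonal value `ρ`.
Positive semidefiniteness tested on the all-ones vector `𝟙` gives `ρ ≥ -1/(C-1)`, and the simplex
matrix with `ρ = -1/(C-1)` lies in `𝒜*`; as `S` is strictly increasing in every entry, minimality
forces equality. The simplex matrix kills `𝟙`, so `‖M 𝟙‖² = 𝟙ᵀ A 𝟙 = 0`.
-/

open Matrix

/-- `ψ : ℝ^k → ℝ` is argument-wise strictly increasing. -/
def ArgwiseStrictMono {k : ℕ} (ψ : (Fin k → ℝ) → ℝ) : Prop :=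
  ∀ (i : Fin k) (t : Fin k → ℝ) (s s' : ℝ), s < s' →
    ψ (Function.update t i s) < ψ (Function.update t i s')

/-- `S(A) = ∑_{i, j₁,…,j_k} (λᵢ ∏ₜ λ_{jₜ}) ψ(A_{i j₁} − 1, …, A_{i j_k} − 1)`. -/
noncomputable def S {k C : ℕ} (ψ : (Fin k → ℝ) → ℝ) (lam : Fin C → ℝ)
    (A : Matrix (Fin C) (Fin C) ℝ) : ℝ :=
  ∑ i : Fin C, ∑ j : Fin k → Fin C,
    (lam i * ∏ t, lam (j t)) * ψ (fun t => A i (j t) - 1)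

/-- `𝒜*` : real symmetric PSD `C×C` matrices with unit diagonal. -/
def AstarSet (C : ℕ) : Set (Matrix (Fin C) (Fin C) ℝ) :=
  {A | A.PosSemidef ∧ ∀ i, A i i = 1}

namespace ArgwiseStrictMono

variable {k : ℕ} {ψ : (Fin k → ℝ) → ℝ}

theorem monotone (h : ArgwiseStrictMono ψ) : Monotone ψ := by
  intro u v huv
  -- raise the coordinates of `u` to those of `v` one at a time
  have step : ∀ s : Finset (Fin k), ψ u ≤ ψ (s.piecewise v u) := by
    intro s
    induction s using Finset.induction with
    | empty => simp
    | insert i s his ih =>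
      have hi : Function.update (s.piecewise v u) i (u i) = s.piecewise v u := by
        simp [Finset.piecewise_eq_of_notMem _ _ _ his]
      rw [Finset.piecewise_insert]
      rcases (huv i).eq_or_lt with heq | hlt
      · rwa [← heq, hi]
      · exact ih.trans ((h i _ _ _ hlt).le.trans_eq' (by rw [hi]))
  simpa using step Finset.univ

theorem lt_of_le_of_lt (h : ArgwiseStrictMono ψ) {u v : Fin k → ℝ} (huv : u ≤ v) {j : Fin k}
    (hj : u j < v j) : ψ u < ψ v :=
  calc ψ u = ψ (Function.update u j (u j)) := by rw [Function.update_eq_self]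
    _ < ψ (Function.update u j (v j)) := h j u _ _ hj
    _ ≤ ψ v := h.monotone (update_le_iff.2 ⟨le_rfl, fun i _ => huv i⟩)

end ArgwiseStrictMono

section S

variable {k C : ℕ} {ψ : (Fin k → ℝ) → ℝ} {lam : Fin C → ℝ}

theorem S_weight_pos (hlam : ∀ i, 0 < lam i) (i : Fin C) (j : Fin k → Fin C) :
    0 < lam i * ∏ t, lam (j t) :=
  mul_pos (hlam i) (Finset.prod_pos fun t _ => hlam (j t))

theorem strictConvexOn_S (hk : 1 ≤ k) (hlam : ∀ i, 0 < lam i)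
    (hψ : StrictConvexOn ℝ Set.univ ψ) : StrictConvexOn ℝ Set.univ (S ψ lam) := by
  refine ⟨convex_univ, fun A _ B _ hAB a b ha hb hab => ?_⟩
  obtain ⟨i₀, j₀, hne⟩ : ∃ i j, A i j ≠ B i j := by
    by_contra! h
    exact hAB (Matrix.ext h)
  set u : Fin C → (Fin k → Fin C) → Fin k → ℝ := fun i j t => A i (j t) - 1
  set v : Fin C → (Fin k → Fin C) → Fin k → ℝ := fun i j t => B i (j t) - 1
  have hcomb : ∀ i j, (fun t => (a • A + b • B) i (j t) - 1) = a • u i j + b • v i j := by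
    intro i j
    funext t
    simp only [u, v, Matrix.add_apply, Matrix.smul_apply, Pi.add_apply, Pi.smul_apply,
      smul_eq_mul]
    linear_combination hab
  have hterm : ∀ i j, (lam i * ∏ t, lam (j t)) * ψ (a • u i j + b • v i j)
      ≤ a * ((lam i * ∏ t, lam (j t)) * ψ (u i j)) + b * ((lam i * ∏ t, lam (j t)) * ψ (v i j)) :=
    fun i j => by
      have := hψ.convexOn.2 (Set.mem_univ (u i j)) (Set.mem_univ (v i j)) ha.le hb.le hab
      have hw := (S_weight_pos hlam i j).le
      simp only [smul_eq_mul] at this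
      calc _ ≤ (lam i * ∏ t, lam (j t)) * (a * ψ (u i j) + b * ψ (v i j)) := by gcongr
        _ = _ := by ring
  set J : Fin k → Fin C := fun _ => j₀
  have hstrict : u i₀ J ≠ v i₀ J := fun h => hne (by simpa [u, v] using congrFun h ⟨0, hk⟩)
  have hterm_lt : (lam i₀ * ∏ t, lam (J t)) * ψ (a • u i₀ J + b • v i₀ J)
      < a * ((lam i₀ * ∏ t, lam (J t)) * ψ (u i₀ J))
        + b * ((lam i₀ * ∏ t, lam (J t)) * ψ (v i₀ J)) := by
    have := hψ.2 (Set.mem_univ _) (Set.mem_univ _) hstrict ha hb hab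
    have hw := S_weight_pos hlam i₀ J
    simp only [smul_eq_mul] at this
    calc _ < (lam i₀ * ∏ t, lam (J t)) * (a * ψ (u i₀ J) + b * ψ (v i₀ J)) := by gcongr
      _ = _ := by ring
  simp only [S, smul_eq_mul, hcomb, Finset.mul_sum, ← Finset.sum_add_distrib]
  exact Finset.sum_lt_sum (fun i _ => Finset.sum_le_sum fun j _ => hterm i j)
    ⟨i₀, Finset.mem_univ _, Finset.sum_lt_sum (fun j _ => hterm i₀ j)
      ⟨J, Finset.mem_univ _, hterm_lt⟩⟩

theorem S_lt_S_of_le_of_lt (hk : 1 ≤ k) (hlam : ∀ i, 0 < lam i) (hψ : ArgwiseStrictMono ψ)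
    {A B : Matrix (Fin C) (Fin C) ℝ} (hAB : ∀ i j, A i j ≤ B i j) {i₀ j₀ : Fin C}
    (hlt : A i₀ j₀ < B i₀ j₀) : S ψ lam A < S ψ lam B := by
  have hterm : ∀ (i : Fin C) (j : Fin k → Fin C),
      (lam i * ∏ t, lam (j t)) * ψ (fun t => A i (j t) - 1)
        ≤ (lam i * ∏ t, lam (j t)) * ψ (fun t => B i (j t) - 1) := fun i j =>
    mul_le_mul_of_nonneg_left (hψ.monotone fun t => sub_le_sub_right (hAB i (j t)) 1)
      (S_weight_pos hlam i j).le
  set J : Fin k → Fin C := fun _ => j₀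
  have hterm_lt : (lam i₀ * ∏ t, lam (J t)) * ψ (fun t => A i₀ (J t) - 1)
      < (lam i₀ * ∏ t, lam (J t)) * ψ (fun t => B i₀ (J t) - 1) :=
    mul_lt_mul_of_pos_left
      (hψ.lt_of_le_of_lt (fun t => sub_le_sub_right (hAB i₀ j₀) 1) (sub_lt_sub_right hlt 1)
        (j := ⟨0, hk⟩))
      (S_weight_pos hlam i₀ J)
  exact Finset.sum_lt_sum (fun i _ => Finset.sum_le_sum fun j _ => hterm i j)
    ⟨i₀, Finset.mem_univ _, Finset.sum_lt_sum (fun j _ => hterm i₀ j)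
      ⟨J, Finset.mem_univ _, hterm_lt⟩⟩

theorem S_submatrix_perm (σ : Equiv.Perm (Fin C)) (hσ : ∀ i, lam (σ i) = lam i)
    (A : Matrix (Fin C) (Fin C) ℝ) : S ψ lam (A.submatrix σ σ) = S ψ lam A := by
  refine Fintype.sum_equiv σ _ _ fun i => ?_
  refine Fintype.sum_equiv (Equiv.piCongrRight fun _ => σ) _ _ fun j => ?_
  simp [hσ]

end S

section Equicorrelation

variable {n : Type*} [DecidableEq n]

def equicorrelation (n : Type*) [DecidableEq n] (ρ : ℝ) : Matrix n n ℝ :=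
  of fun i j => if i = j then 1 else ρ

theorem isHermitian_equicorrelation (ρ : ℝ) : (equicorrelation n ρ).IsHermitian := by
  ext i j
  simp [equicorrelation, eq_comm]

variable [Fintype n]

theorem equicorrelation_mulVec (ρ : ℝ) (x : n → ℝ) :
    equicorrelation n ρ *ᵥ x = fun i => (1 - ρ) * x i + ρ * ∑ j, x j := by
  funext i
  have hsplit : ∀ j, (if i = j then (1 : ℝ) else ρ) * x j
      = ρ * x j + if i = j then (1 - ρ) * x j else 0 :=
    fun j => by split_ifs <;> ring
  simp only [equicorrelation, mulVec, dotProduct, of_apply, hsplit, Finset.sum_add_distrib,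
    Finset.sum_ite_eq, Finset.mem_univ, if_true, ← Finset.mul_sum]
  ring

theorem dotProduct_equicorrelation_mulVec (ρ : ℝ) (x : n → ℝ) :
    x ⬝ᵥ (equicorrelation n ρ *ᵥ x) = (1 - ρ) * ∑ i, x i ^ 2 + ρ * (∑ i, x i) ^ 2 := by
  have hexpand : ∀ i, x i * ((1 - ρ) * x i + ρ * ∑ j, x j)
      = (1 - ρ) * x i ^ 2 + (ρ * ∑ j, x j) * x i :=
    fun i => by ring
  simp only [equicorrelation_mulVec, dotProduct, hexpand, Finset.sum_add_distrib, ← Finset.mul_sum]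
  ring

theorem le_of_posSemidef_equicorrelation {ρ : ℝ} (h : (equicorrelation n ρ).PosSemidef)
    (hn : 2 ≤ Fintype.card n) : -1 / ((Fintype.card n : ℝ) - 1) ≤ ρ := by
  have hc : (1 : ℝ) < Fintype.card n := by exact_mod_cast hn
  have := h.dotProduct_mulVec_nonneg (fun _ => 1)
  simp only [star_trivial, dotProduct_equicorrelation_mulVec] at this
  rw [div_le_iff₀ (by linarith)]
  simp only [one_pow, Finset.sum_const, Finset.card_univ, nsmul_eq_mul, mul_one] at this
  nlinarith

theorem posSemidef_equicorrelation (hn : 2 ≤ Fintype.card n) :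
    (equicorrelation n (-1 / ((Fintype.card n : ℝ) - 1))).PosSemidef := by
  have hc : (1 : ℝ) < Fintype.card n := by exact_mod_cast hn
  set c : ℝ := (Fintype.card n : ℝ)
  refine .of_dotProduct_mulVec_nonneg (isHermitian_equicorrelation _) fun x => ?_
  rw [star_trivial, dotProduct_equicorrelation_mulVec]
  have hCS : (∑ i, x i) ^ 2 ≤ c * ∑ i, x i ^ 2 := by
    simpa using sq_sum_le_card_mul_sum_sq (s := Finset.univ) (f := x)
  have hkey : (1 - -1 / (c - 1)) * ∑ i, x i ^ 2 + -1 / (c - 1) * (∑ i, x i) ^ 2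
      = (c * ∑ i, x i ^ 2 - (∑ i, x i) ^ 2) / (c - 1) := by
    have : c - 1 ≠ 0 := by linarith
    field_simp
    ring
  rw [hkey]
  exact div_nonneg (by linarith) (by linarith)

theorem equicorrelation_mulVec_one (hn : 2 ≤ Fintype.card n) :
    equicorrelation n (-1 / ((Fintype.card n : ℝ) - 1)) *ᵥ (fun _ => 1) = 0 := by
  have hc : (Fintype.card n : ℝ) - 1 ≠ 0 := by
    have : (2 : ℝ) ≤ Fintype.card n := by exact_mod_cast hn
    linarith
  funext i
  simp only [equicorrelation_mulVec, Finset.sum_const, Finset.card_univ, nsmul_eq_mul,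
    Pi.zero_apply]
  field_simp
  ring

end Equicorrelation

theorem eq_equicorrelation_of_forall_submatrix_perm_eq {n : Type*} [DecidableEq n]
    {A : Matrix n n ℝ} (hdiag : ∀ i, A i i = 1) (hperm : ∀ σ : Equiv.Perm n, A.submatrix σ σ = A)
    {i₀ j₀ : n} (h₀ : i₀ ≠ j₀) : A = equicorrelation n (A i₀ j₀) := by
  ext i j
  by_cases hij : i = j
  · simp [equicorrelation, hij, hdiag]
  obtain ⟨σ, hσ⟩ := Equiv.Perm.exists_extending_pair ![i₀, j₀] ![i, j]
    (injective_pair_iff_ne.2 h₀) (injective_pair_iff_ne.2 hij)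
  have hi : σ i₀ = i := hσ 0
  have hj : σ j₀ = j := hσ 1
  simp only [equicorrelation, of_apply, hij, if_false]
  rw [← hi, ← hj, ← congrFun₂ (hperm σ) i₀ j₀, submatrix_apply]

theorem strictMono_S_equicorrelation {k C : ℕ} {ψ : (Fin k → ℝ) → ℝ} {lam : Fin C → ℝ}
    (hk : 1 ≤ k) (hC : 2 ≤ C) (hlam : ∀ i, 0 < lam i) (hψ : ArgwiseStrictMono ψ) :
    StrictMono fun ρ => S ψ lam (equicorrelation (Fin C) ρ) := by
  intro ρ ρ' hρ
  refine S_lt_S_of_le_of_lt hk hlam hψ (fun i j => ?_)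
    (i₀ := ⟨0, by omega⟩) (j₀ := ⟨1, by omega⟩) ?_
  · simp only [equicorrelation, of_apply]
    split_ifs <;> linarith
  · simpa [equicorrelation] using hρ

section AstarSet

variable {C : ℕ}

theorem convex_AstarSet : Convex ℝ (AstarSet C) := by
  intro A hA B hB a b ha hb hab
  refine ⟨(hA.1.smul ha).add (hB.1.smul hb), fun i => ?_⟩
  simp [hA.2 i, hB.2 i, hab]

theorem submatrix_mem_AstarSet {A : Matrix (Fin C) (Fin C) ℝ} (hA : A ∈ AstarSet C)
    (σ : Equiv.Perm (Fin C)) : A.submatrix σ σ ∈ AstarSet C :=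
  ⟨hA.1.submatrix σ, fun i => hA.2 (σ i)⟩

theorem equicorrelation_mem_AstarSet (hC : 2 ≤ C) :
    equicorrelation (Fin C) (-1 / ((C : ℝ) - 1)) ∈ AstarSet C :=
  ⟨by simpa using posSemidef_equicorrelation (n := Fin C) (by simpa using hC),
    fun i => by simp [equicorrelation]⟩

end AstarSet

/-- for balanced classes `λᵢ = 1/C`, the minimizer `A*` of `S` over `𝒜*` has
unit diagonal and all off-diagonal entries `−1/(C−1)`; consequently any `M` with unit-norm
columns and `MᵀM = A*` (for `d ≥ C−1`) has columns summing to zero (simplex ETF). -/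
theorem stmt12 (k C : ℕ) (hk : 1 ≤ k) (hC : 2 ≤ C)
    (lam : Fin C → ℝ) (hlam : ∀ i, lam i = 1 / (C : ℝ))
    (ψ : (Fin k → ℝ) → ℝ)
    (hconv : StrictConvexOn ℝ Set.univ ψ) (hmono : ArgwiseStrictMono ψ)
    (A : Matrix (Fin C) (Fin C) ℝ) (hA : A ∈ AstarSet C)
    (hmin : ∀ B ∈ AstarSet C, S ψ lam A ≤ S ψ lam B) :
    (∀ i, A i i = 1) ∧
    (∀ i j : Fin C, i ≠ j → A i j = -1 / ((C : ℝ) - 1)) ∧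
    (∀ d : ℕ, C - 1 ≤ d → ∀ M : Matrix (Fin d) (Fin C) ℝ,
      (∀ j, ∑ i, (M i j) ^ 2 = 1) → Mᵀ * M = A → ∀ r : Fin d, ∑ j, M r j = 0) := by
  have hpos : ∀ i, 0 < lam i := fun i => by
    rw [hlam]
    exact one_div_pos.2 (by exact_mod_cast (by omega : 0 < C))
  -- a strictly convex function has at most one minimiser, and `S` is invariant under relabelling
  have hperm : ∀ σ : Equiv.Perm (Fin C), A.submatrix σ σ = A := fun σ =>
    ((strictConvexOn_S hk hpos hconv).subset (Set.subset_univ _) convex_AstarSet).eq_of_isMinOn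
      (fun B hB => (S_submatrix_perm σ (by simp [hlam]) A).trans_le (hmin B hB)) hmin
      (submatrix_mem_AstarSet hA σ) hA
  obtain ⟨i₀, j₀, h₀⟩ := Fintype.exists_pair_of_one_lt_card (α := Fin C) (by simp; omega)
  set ρ := A i₀ j₀
  have hAρ : A = equicorrelation (Fin C) ρ :=
    eq_equicorrelation_of_forall_submatrix_perm_eq hA.2 hperm h₀
  have hρ_ge : -1 / ((C : ℝ) - 1) ≤ ρ := by
    have hpsd : (equicorrelation (Fin C) ρ).PosSemidef := hAρ ▸ hA.1
    simpa using le_of_posSemidef_equicorrelation hpsd (by simpa using hC)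
  have hρ : ρ = -1 / ((C : ℝ) - 1) :=
    le_antisymm (not_lt.1 fun hlt => (hmin _ (equicorrelation_mem_AstarSet hC)).not_gt
      (hAρ ▸ strictMono_S_equicorrelation hk hC hpos hmono hlt)) hρ_ge
  have hrow : A *ᵥ (fun _ => 1) = 0 := by
    rw [hAρ, hρ]
    simpa using equicorrelation_mulVec_one (n := Fin C) (by simpa using hC)
  refine ⟨hA.2, fun i j hij => by rw [hAρ, ← hρ]; simp [equicorrelation, hij], ?_⟩
  intro d _ M _ hMM r
  have hM : M *ᵥ (fun _ => 1) = 0 := by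
    rwa [← conjTranspose_mul_self_mulVec_eq_zero, conjTranspose_eq_transpose_of_trivial, hMM]
  simpa [mulVec, dotProduct] using congrFun hM r
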